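/- Let M, Λ, γ ∈ ℝ and define B(r) = 1 − 2M/r − (Λ/3)r² + γr for r > 0, together with A(r) = (1−B(r))/r² + B''(r)/2 and E(r) = (1/2)[(1−B(r))/r² + B'(r)/r − B''(r)/2]. Then for all r > 0: A(r) = −γ/r, E(r) = 3M/r³, A'(r) + A(r)/r = 0, and −(8/3)A(r)E(r) = 8Mγ/r⁴. -/

import Mathlib

/-- The Harada metric function `B(r) = 1 − 2M/r − (Λ/3)r² + γr`. -/
noncomputable def haradaB (M Λ γ : ℝ) (r : ℝ) : ℝ :=
  1 - 2 * M / r - (Λ / 3) * r ^ 2 + γ * r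

lemma haradaB_hasDerivAt (M Λ γ r : ℝ) (hr : r ≠ 0) :
    HasDerivAt (haradaB M Λ γ) (2 * M / r ^ 2 - 2 * Λ / 3 * r + γ) r := by
  have h1 : HasDerivAt (fun x : ℝ => 2 * M / x) (2 * M * (-(r ^ 2)⁻¹)) r := by
    simpa [div_eq_mul_inv] using (hasDerivAt_inv hr).const_mul (2 * M)
  have h2 : HasDerivAt (fun x : ℝ => (Λ / 3) * x ^ 2) ((Λ / 3) * (2 * r ^ 1)) r := by
    simpa using (hasDerivAt_pow 2 r).const_mul (Λ / 3)
  have h3 : HasDerivAt (fun x : ℝ => γ * x) (γ * 1) r := (hasDerivAt_id r).const_mul γ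
  have h := (((hasDerivAt_const r (1 : ℝ)).sub h1).sub h2).add h3
  have hfun : haradaB M Λ γ = fun x : ℝ => 1 - 2 * M / x - (Λ / 3) * x ^ 2 + γ * x := rfl
  rw [hfun]
  exact h.congr_deriv (by ring)

lemma haradaB_deriv (M Λ γ r : ℝ) (hr : r ≠ 0) :
    deriv (haradaB M Λ γ) r = 2 * M / r ^ 2 - 2 * Λ / 3 * r + γ :=
  (haradaB_hasDerivAt M Λ γ r hr).deriv

lemma haradaB_deriv2 (M Λ γ r : ℝ) (hr : r ≠ 0) :
    deriv (deriv (haradaB M Λ γ)) r = -4 * M / r ^ 3 - 2 * Λ / 3 := by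
  have hEq : deriv (haradaB M Λ γ) =ᶠ[nhds r]
      fun x : ℝ => 2 * M / x ^ 2 - 2 * Λ / 3 * x + γ := by
    filter_upwards [eventually_ne_nhds hr] with x hx
    exact haradaB_deriv M Λ γ x hx
  rw [hEq.deriv_eq]
  have h1 : HasDerivAt (fun x : ℝ => 2 * M / x ^ 2)
      (2 * M * (-(2 * r ^ 1) / (r ^ 2) ^ 2)) r := by
    simpa [div_eq_mul_inv] using
      ((hasDerivAt_pow 2 r).inv (pow_ne_zero 2 hr)).const_mul (2 * M)
  have h2 : HasDerivAt (fun x : ℝ => 2 * Λ / 3 * x) (2 * Λ / 3 * 1) r :=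
    (hasDerivAt_id r).const_mul (2 * Λ / 3)
  have h := ((h1.sub h2).add (hasDerivAt_const r γ)).deriv
  rw [show (fun x : ℝ => 2 * M / x ^ 2 - 2 * Λ / 3 * x + γ) = ((fun x : ℝ => 2 * M / x ^ 2) - fun x : ℝ => 2 * Λ / 3 * x) + fun x : ℝ => γ from rfl, h]
  field_simp
  ring

lemma haradaA_eq (M Λ γ r : ℝ) (hr : r ≠ 0) :
    (1 - haradaB M Λ γ r) / r ^ 2 + deriv (deriv (haradaB M Λ γ)) r / 2 = -γ / r := by
  rw [haradaB_deriv2 M Λ γ r hr]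
  unfold haradaB
  field_simp
  ring

/-- For the Harada metric, `A(r) = −γ/r`, `E(r) = 3M/r³`,
`A' + A/r = 0` (vanishing Cotton tensor), and `−(8/3)AE = 8Mγ/r⁴` on `(0,∞)`. -/
theorem harada_conformal_gravity (M Λ γ : ℝ) :
    ∀ r : ℝ, 0 < r →
      ((1 - haradaB M Λ γ r) / r ^ 2 + deriv (deriv (haradaB M Λ γ)) r / 2 = -γ / r) ∧
      ((1 / 2) * ((1 - haradaB M Λ γ r) / r ^ 2 + deriv (haradaB M Λ γ) r / r
          - deriv (deriv (haradaB M Λ γ)) r / 2) = 3 * M / r ^ 3) ∧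
      (deriv (fun s => (1 - haradaB M Λ γ s) / s ^ 2
            + deriv (deriv (haradaB M Λ γ)) s / 2) r
          + ((1 - haradaB M Λ γ r) / r ^ 2 + deriv (deriv (haradaB M Λ γ)) r / 2) / r
          = 0) ∧
      (-(8 / 3) * ((1 - haradaB M Λ γ r) / r ^ 2 + deriv (deriv (haradaB M Λ γ)) r / 2)
          * ((1 / 2) * ((1 - haradaB M Λ γ r) / r ^ 2 + deriv (haradaB M Λ γ) r / r
              - deriv (deriv (haradaB M Λ γ)) r / 2)) = 8 * M * γ / r ^ 4) := by
  intro r hr0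
  have hr : r ≠ 0 := ne_of_gt hr0
  have hA := haradaA_eq M Λ γ r hr
  have hE : (1 / 2) * ((1 - haradaB M Λ γ r) / r ^ 2 + deriv (haradaB M Λ γ) r / r
      - deriv (deriv (haradaB M Λ γ)) r / 2) = 3 * M / r ^ 3 := by
    rw [haradaB_deriv M Λ γ r hr, haradaB_deriv2 M Λ γ r hr]
    unfold haradaB
    field_simp
    ring
  refine ⟨hA, hE, ?_, ?_⟩
  · have hEq : (fun s => (1 - haradaB M Λ γ s) / s ^ 2
        + deriv (deriv (haradaB M Λ γ)) s / 2) =ᶠ[nhds r] fun s : ℝ => -γ / s := by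
      filter_upwards [eventually_ne_nhds hr] with x hx
      exact haradaA_eq M Λ γ x hx
    rw [hEq.deriv_eq, hA]
    have h : HasDerivAt (fun s : ℝ => -γ / s) (-γ * (-(r ^ 2)⁻¹)) r := by
      simpa [div_eq_mul_inv] using (hasDerivAt_inv hr).const_mul (-γ)
    rw [h.deriv]
    field_simp
    ring
  · rw [hA, hE]
    field_simp
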